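/- arXiv:1601.04539 — 6 statements merged into one kernel-verified Lean document; each statement's English description precedes it below -/
import Mathlib

section
/- Let S be the set of lines in R² consisting of: horizontal lines y = k for k ∈ ℤ, lines of slope √3 through points (2k, 0) for k ∈ ℤ, and lines of slope -√3 through points (2k+1, 0) for k ∈ ℤ (the kagome line system). Then for every odd positive integer m and every line g ∈ S, the scaled line m·g = {m·x : x ∈ g} again belongs to S. -/
open Real

/-- The kagome line system in standard position: horizontal lines `y = k` (`k ∈ ℤ`),
lines of slope `√3` through `(2k, 0)`, and lines of slope `-√3` through `(2k+1, 0)`. -/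
def kagomeLines : Set (Set (ℝ × ℝ)) :=
  {g | (∃ k : ℤ, g = {p : ℝ × ℝ | p.2 = (k : ℝ)}) ∨
       (∃ k : ℤ, g = {p : ℝ × ℝ | p.2 = Real.sqrt 3 * (p.1 - 2 * (k : ℝ))}) ∨
       (∃ k : ℤ, g = {p : ℝ × ℝ | p.2 = -Real.sqrt 3 * (p.1 - (2 * (k : ℝ) + 1))})}

/-!
A dilation `x ↦ m x` maps the horizontal line `y = k` to `y = m k` and keeps the slope of every
other line, multiplying its `x`-intercept by `m`. For odd `m` this preserves the parity of an
integer intercept, so the three families of the kagome system are mapped into themselves.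
-/

open Pointwise

section Dilation

variable {r : ℝ}

theorem smul_setOf_snd_eq (hr : r ≠ 0) (b : ℝ) :
    r • {p : ℝ × ℝ | p.2 = b} = {p | p.2 = r * b} := by
  ext p
  simp only [Set.mem_smul_set_iff_inv_smul_mem₀ hr, Set.mem_ofPred_eq, Prod.smul_snd, smul_eq_mul]
  rw [inv_mul_eq_iff_eq_mul₀ hr]

theorem smul_setOf_snd_eq_mul_sub (hr : r ≠ 0) (a c : ℝ) :
    r • {p : ℝ × ℝ | p.2 = a * (p.1 - c)} = {p | p.2 = a * (p.1 - r * c)} := by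
  ext p
  simp only [Set.mem_smul_set_iff_inv_smul_mem₀ hr, Set.mem_ofPred_eq, Prod.smul_fst,
    Prod.smul_snd, smul_eq_mul]
  have hscale : r * (a * (r⁻¹ * p.1 - c)) = a * (p.1 - r * c) := by field_simp
  rw [inv_mul_eq_iff_eq_mul₀ hr, hscale]

end Dilation

theorem stmt_1_general (m : ℤ) (hmodd : Odd m) (g : Set (ℝ × ℝ))
    (hg : g ∈ kagomeLines) :
    (fun p : ℝ × ℝ => ((m : ℝ) * p.1, (m : ℝ) * p.2)) '' g ∈ kagomeLines := by
  have hm : (m : ℝ) ≠ 0 := Int.cast_ne_zero.mpr (by rintro rfl; simp at hmodd)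
  change (m : ℝ) • g ∈ kagomeLines
  rcases hg with ⟨k, rfl⟩ | ⟨k, rfl⟩ | ⟨k, rfl⟩
  · refine Or.inl ⟨m * k, ?_⟩
    rw [smul_setOf_snd_eq hm]
    push_cast
    rfl
  · refine Or.inr (Or.inl ⟨m * k, ?_⟩)
    rw [smul_setOf_snd_eq_mul_sub hm]
    push_cast
    rw [mul_left_comm]
  · obtain ⟨j, hj⟩ := hmodd.mul (odd_two_mul_add_one k)
    refine Or.inr (Or.inr ⟨j, ?_⟩)
    rw [smul_setOf_snd_eq_mul_sub hm]
    congr! 5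
    exact_mod_cast hj

/-- For every odd positive integer `m` and every line `g` of the kagome line system,
the scaled line `m·g` again belongs to the system. -/
theorem stmt_1 (m : ℤ) (hmodd : Odd m) (hmpos : 0 < m) (g : Set (ℝ × ℝ))
    (hg : g ∈ kagomeLines) :
    (fun p : ℝ × ℝ => ((m : ℝ) * p.1, (m : ℝ) * p.2)) '' g ∈ kagomeLines :=
  stmt_1_general m hmodd g hg
end

section
/- Let I be a countable family of nondegenerate closed intervals in ℝ. Define x ~ y iff for every ε > 0 there is a finite chain I₁, …, I_N of intervals from I such that the separation distances sep({x}, I₁), sep(I₁, I₂), …, sep(I_N, {y}) are all at most ε. Then ~ is an equivalence relation on ℝ and each equivalence class is a closed set. -/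
/-- The separation distance between two subsets of `ℝ`. -/
noncomputable def sep (A B : Set ℝ) : ℝ :=
  sInf {d : ℝ | ∃ a ∈ A, ∃ b ∈ B, d = |a - b|}

/-- A nondegenerate closed interval (possibly a half-line or all of `ℝ`). -/
def IsNondegClosedInterval (J : Set ℝ) : Prop :=
  IsClosed J ∧ J.OrdConnected ∧ ∃ a ∈ J, ∃ b ∈ J, a < b

/-- `x` and `y` are related iff for every `ε > 0` there is a finite `ε`-chain of
intervals from `I` connecting `x` to `y`. -/
def chainRel (I : Set (Set ℝ)) (x y : ℝ) : Prop :=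
  ∀ ε > (0 : ℝ), ∃ L : List (Set ℝ), (∀ J ∈ L, J ∈ I) ∧
    List.Chain' (fun A B => sep A B ≤ ε) ({x} :: (L ++ [{y}]))

/-!
Separation from a point satisfies the triangle inequality
`sep A B ≤ sep A {y} + sep {y} B`, so an `ε/2`-chain from `x` to `y` followed by one from `y`
to `z` is an `ε`-chain from `x` to `z`. Reversing a chain gives symmetry, and a limit `y` of
points `y'` related to `x` is related to `x`: end an `ε/2`-chain to a `y'` with
`|y' - y| ≤ ε/2` at `y` instead.
-/

open List

lemma sep_nonneg (A B : Set ℝ) : 0 ≤ sep A B :=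
  Real.sInf_nonneg <| by rintro d ⟨a, -, b, -, rfl⟩; positivity

lemma sep_le_abs_sub {A B : Set ℝ} {a b : ℝ} (ha : a ∈ A) (hb : b ∈ B) : sep A B ≤ |a - b| :=
  csInf_le ⟨0, by rintro d ⟨a, -, b, -, rfl⟩; positivity⟩ ⟨a, ha, b, hb, rfl⟩

lemma le_sep {A B : Set ℝ} {c : ℝ} (hA : A.Nonempty) (hB : B.Nonempty)
    (h : ∀ a ∈ A, ∀ b ∈ B, c ≤ |a - b|) : c ≤ sep A B := by
  obtain ⟨a, ha⟩ := hA
  obtain ⟨b, hb⟩ := hB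
  exact le_csInf ⟨_, a, ha, b, hb, rfl⟩ (by rintro d ⟨a, ha, b, hb, rfl⟩; exact h a ha b hb)

lemma sep_comm (A B : Set ℝ) : sep A B = sep B A := by
  unfold sep
  congr 1
  ext d
  constructor <;> rintro ⟨a, ha, b, hb, rfl⟩ <;> exact ⟨b, hb, a, ha, abs_sub_comm _ _⟩

lemma sep_empty_left (B : Set ℝ) : sep ∅ B = 0 := by
  simp [sep]

lemma sep_empty_right (A : Set ℝ) : sep A ∅ = 0 := by
  rw [sep_comm, sep_empty_left]

lemma sep_singleton_le_dist (x y : ℝ) : sep {x} {y} ≤ dist x y :=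
  sep_le_abs_sub rfl rfl

/-- No nonemptiness is needed: a separation from `∅` is `sInf ∅ = 0`. -/
lemma sep_le_sep_singleton_add (A B : Set ℝ) (y : ℝ) : sep A B ≤ sep A {y} + sep {y} B := by
  rcases A.eq_empty_or_nonempty with rfl | hA
  · rw [sep_empty_left]; exact add_nonneg (sep_nonneg _ _) (sep_nonneg _ _)
  rcases B.eq_empty_or_nonempty with rfl | hB
  · rw [sep_empty_right]; exact add_nonneg (sep_nonneg _ _) (sep_nonneg _ _)
  have hA_y : ∀ b ∈ B, sep A B - |y - b| ≤ sep A {y} := fun b hb =>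
    le_sep hA (Set.singleton_nonempty y) fun a ha y' (hy' : y' = y) => by
      subst y'
      linarith [sep_le_abs_sub ha hb, abs_sub_le a y b]
  have hy_B : sep A B - sep A {y} ≤ sep {y} B :=
    le_sep (Set.singleton_nonempty y) hB fun y' (hy' : y' = y) b hb => by
      subst y'
      linarith [hA_y b hb]
  linarith

lemma List.IsChain.sep_append_through_singleton {ε₁ ε₂ : ℝ} (hε₁ : 0 ≤ ε₁) (hε₂ : 0 ≤ ε₂)
    {l₁ l₂ : List (Set ℝ)} {y : ℝ}
    (h₁ : IsChain (fun A B => sep A B ≤ ε₁) (l₁ ++ [{y}]))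
    (h₂ : IsChain (fun A B => sep A B ≤ ε₂) ({y} :: l₂)) :
    IsChain (fun A B => sep A B ≤ ε₁ + ε₂) (l₁ ++ l₂) := by
  obtain ⟨h₁, -, hlast⟩ := List.isChain_append.1 h₁
  obtain ⟨hhead, h₂⟩ := List.isChain_cons.1 h₂
  refine h₁.imp (fun A B h => by linarith) |>.append (h₂.imp fun A B h => by linarith) ?_
  intro A hA B hB
  calc sep A B ≤ sep A {y} + sep {y} B := sep_le_sep_singleton_add A B y
    _ ≤ ε₁ + ε₂ := add_le_add (hlast A hA _ rfl) (hhead B hB)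

section chainRel

variable (I : Set (Set ℝ))

lemma chainRel_refl (x : ℝ) : chainRel I x x := fun ε hε =>
  ⟨[], by simp, isChain_pair.2 <| (sep_singleton_le_dist x x).trans (by simpa using hε.le)⟩

variable {I}

lemma chainRel.symm {x y : ℝ} (h : chainRel I x y) : chainRel I y x := by
  intro ε hε
  obtain ⟨L, hL, hchain⟩ := h ε hε
  refine ⟨L.reverse, fun J hJ => hL J (mem_reverse.1 hJ), ?_⟩
  have hrev : ({y} :: (L.reverse ++ [{x}]) : List (Set ℝ)) = ({x} :: (L ++ [{y}])).reverse := by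
    simp
  rw [hrev]
  exact isChain_reverse.2 <| hchain.imp fun A B h => by rwa [sep_comm]

lemma chainRel.trans {x y z : ℝ} (hxy : chainRel I x y) (hyz : chainRel I y z) :
    chainRel I x z := by
  intro ε hε
  obtain ⟨L₁, hL₁, h₁⟩ := hxy (ε / 2) (half_pos hε)
  obtain ⟨L₂, hL₂, h₂⟩ := hyz (ε / 2) (half_pos hε)
  refine ⟨L₁ ++ L₂, fun J hJ => (mem_append.1 hJ).elim (hL₁ J) (hL₂ J), ?_⟩
  rw [append_assoc, ← add_halves ε]
  exact IsChain.sep_append_through_singleton (l₁ := {x} :: L₁) (half_pos hε).le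
    (half_pos hε).le h₁ h₂

lemma isClosed_setOf_chainRel (x : ℝ) : IsClosed {y : ℝ | chainRel I x y} := by
  refine isClosed_of_closure_subset fun y hy ε hε => ?_
  obtain ⟨y', hy', hdist⟩ := Metric.mem_closure_iff.1 hy (ε / 2) (half_pos hε)
  obtain ⟨L, hL, h₁⟩ := hy' (ε / 2) (half_pos hε)
  have h₂ : IsChain (fun A B => sep A B ≤ ε / 2) [{y'}, {y}] :=
    isChain_pair.2 <| (sep_singleton_le_dist y' y).trans (by rw [dist_comm]; exact hdist.le)
  refine ⟨L, hL, ?_⟩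
  rw [← add_halves ε]
  exact IsChain.sep_append_through_singleton (l₁ := {x} :: L) (half_pos hε).le
    (half_pos hε).le h₁ h₂

end chainRel

theorem stmt_3_general (I : Set (Set ℝ)) :
    Equivalence (chainRel I) ∧ ∀ x : ℝ, IsClosed {y : ℝ | chainRel I x y} :=
  ⟨⟨chainRel_refl I, chainRel.symm, chainRel.trans⟩, isClosed_setOf_chainRel⟩

/-- For a countable family of nondegenerate closed intervals, the chain relation is an
equivalence relation on `ℝ` whose equivalence classes are closed subsets of `ℝ`. -/
theorem stmt_3 (I : Set (Set ℝ)) (hcount : I.Countable)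
    (hI : ∀ J ∈ I, IsNondegClosedInterval J) :
    Equivalence (chainRel I) ∧ ∀ x : ℝ, IsClosed {y : ℝ | chainRel I x y} :=
  stmt_3_general I
end

section
/- Let I be a countable family of nondegenerate closed intervals in ℝ. Then there exists a family C of pairwise disjoint closed intervals in ℝ such that (i) every interval of I is contained in some interval of C, and (ii) C is minimal: if C' is any family of pairwise disjoint closed intervals covering I, and I₀ ∈ I satisfies I₀ ⊆ C' for some C' ∈ C', then the interval C ∈ C containing I₀ satisfies C ⊆ C'. -/
/-- A closed interval of `ℝ` (possibly unbounded, a half-line or all of `ℝ`). -/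
def IsClosedInterval (J : Set ℝ) : Prop :=
  IsClosed J ∧ J.OrdConnected

/-- Minimal disjoint cover lemma: every countable family `I` of nondegenerate closed
intervals in `ℝ` admits a family `C` of pairwise disjoint closed intervals covering `I`
which is minimal among all such disjoint covers. -/
theorem stmt_5 (I : Set (Set ℝ)) (hcount : I.Countable)
    (hI : ∀ J ∈ I, IsClosedInterval J ∧ ∃ a ∈ J, ∃ b ∈ J, a < b) :
    ∃ C : Set (Set ℝ),
      (∀ c ∈ C, IsClosedInterval c) ∧
      (C.Pairwise fun c c' => Disjoint c c') ∧
      (∀ I₀ ∈ I, ∃ c ∈ C, I₀ ⊆ c) ∧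
      (∀ C' : Set (Set ℝ),
        (∀ c' ∈ C', IsClosedInterval c') →
        (C'.Pairwise fun c c' => Disjoint c c') →
        (∀ I₀ ∈ I, ∃ c' ∈ C', I₀ ⊆ c') →
        ∀ I₀ ∈ I, ∀ c' ∈ C', I₀ ⊆ c' → ∀ c ∈ C, I₀ ⊆ c → c ⊆ c') := by
  classical
  -- D : the collection of all valid disjoint closed-interval covers of I
  set D : Set (Set (Set ℝ)) :=
    {C' | (∀ c' ∈ C', IsClosedInterval c') ∧
      (C'.Pairwise fun c c' => Disjoint c c') ∧
      (∀ I₀ ∈ I, ∃ c' ∈ C', I₀ ⊆ c')} with hDdef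
  -- fam J : all pieces of all covers containing J
  set fam : Set ℝ → Set (Set ℝ) :=
    fun J => {c' | ∃ C' ∈ D, c' ∈ C' ∧ J ⊆ c'} with hfamdef
  set f : Set ℝ → Set ℝ := fun J => ⋂₀ fam J with hfdef
  have hsub : ∀ J, J ⊆ f J := by
    intro J x hx
    refine Set.mem_sInter.2 ?_
    rintro c' ⟨C', _, _, hJc⟩
    exact hJc hx
  have hci : ∀ J, IsClosedInterval (f J) := by
    intro J
    constructor
    · refine isClosed_sInter ?_
      rintro c' ⟨C', hC', hc', -⟩
      exact (hC'.1 c' hc').1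
    · refine Set.ordConnected_sInter ?_
      rintro c' ⟨C', hC', hc', -⟩
      exact (hC'.1 c' hc').2
  have hkey : ∀ J1 ∈ I, ∀ J2 ∈ I, (f J1 ∩ f J2).Nonempty → fam J1 ⊆ fam J2 := by
    rintro J1 hJ1 J2 hJ2 ⟨x, hx1, hx2⟩ c' ⟨C', hC', hc', hJc⟩
    obtain ⟨c'', hc'', hJ2c⟩ := hC'.2.2 J2 hJ2
    have hxc' : x ∈ c' := Set.mem_sInter.1 hx1 c' ⟨C', hC', hc', hJc⟩
    have hxc'' : x ∈ c'' := Set.mem_sInter.1 hx2 c'' ⟨C', hC', hc'', hJ2c⟩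
    have hcc : c' = c'' := by
      by_contra h
      exact Set.disjoint_left.1 (hC'.2.1 hc' hc'' h) hxc' hxc''
    exact ⟨C', hC', hc', hcc ▸ hJ2c⟩
  refine ⟨f '' I, ?_, ?_, ?_, ?_⟩
  · rintro c ⟨J, hJ, rfl⟩
    exact hci J
  · rintro c ⟨J1, hJ1, rfl⟩ c2 ⟨J2, hJ2, rfl⟩ hne
    rw [Set.disjoint_iff_inter_eq_empty]
    by_contra h
    have hne' : (f J1 ∩ f J2).Nonempty := Set.nonempty_iff_ne_empty.2 h
    have hne'' : (f J2 ∩ f J1).Nonempty := ⟨hne'.choose, hne'.choose_spec.2, hne'.choose_spec.1⟩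
    have : fam J1 = fam J2 :=
      Set.Subset.antisymm (hkey J1 hJ1 J2 hJ2 hne') (hkey J2 hJ2 J1 hJ1 hne'')
    exact hne (by simp only [hfdef, this])
  · intro I₀ hI₀
    exact ⟨f I₀, ⟨I₀, hI₀, rfl⟩, hsub I₀⟩
  · intro C' h1 h2 h3 I₀ hI₀ c' hc' hsub' c hc hsubc
    obtain ⟨J, hJ, rfl⟩ := hc
    have hC'D : C' ∈ D := ⟨h1, h2, h3⟩
    obtain ⟨p, hp, hJp⟩ := h3 J hJ
    have hfJp : f J ⊆ p := Set.sInter_subset_of_mem ⟨C', hC'D, hp, hJp⟩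
    obtain ⟨_, ⟨a, ha, -⟩⟩ := hI I₀ hI₀
    have hap : a ∈ p := hfJp (hsubc ha)
    have hac' : a ∈ c' := hsub' ha
    have : p = c' := by
      by_contra h
      exact Set.disjoint_left.1 (h2 hp hc' h) hap hac'
    exact this ▸ hfJp
end

section
/- Let α₁, α₂ : [0,1] → ℝ² be continuously differentiable curves parametrized by arc length (|α₁'(s)| = |α₂'(t)| = 1 for all s, t), satisfying α₁'(s)·(1,0) > 1/√2 and α₂'(t)·(0,1) > 1/√2 for all s, t ∈ (0,1). Then the laminar map f(s,t) = α₁(s) + α₂(t) is injective on [0,1]². -/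
open Set

/-!
A unit vector whose first coordinate exceeds `1/√2` lies in the open cone `|y| < x`, so the
tangents of `α₁` lie in `|y| < x` and those of `α₂` in `|x| < y`. Both curves therefore increase
strictly in the diagonal coordinate `x + y`, while in the antidiagonal coordinate `x - y` the first
increases and the second decreases. If `α₁ s + α₂ t = α₁ s' + α₂ t'` with `s < s'`, the `x + y`
coordinate forces `t' < t` and the `x - y` coordinate forces `t < t'`. Hence `s = s'`, and `t = t'`
because `α₂` is injective.
-/

lemma abs_apply_lt_apply_of_norm_le_one {ι : Type*} [Fintype ι] {v : EuclideanSpace ℝ ι}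
    {i j : ι} (hij : i ≠ j) (hv : ‖v‖ ≤ 1) (hi : 1 / √2 < v i) : |v j| < v i := by
  have hsum : v i ^ 2 + v j ^ 2 ≤ 1 := calc
    v i ^ 2 + v j ^ 2 ≤ ∑ k, v k ^ 2 :=
      Finset.add_le_sum (fun k _ => sq_nonneg (v k)) (Finset.mem_univ i) (Finset.mem_univ j) hij
    _ = ‖v‖ ^ 2 := (EuclideanSpace.real_norm_sq_eq v).symm
    _ ≤ 1 := pow_le_one₀ (norm_nonneg v) hv
  have hi2 : 1 / 2 < v i ^ 2 := calc
    (1 : ℝ) / 2 = (1 / √2) ^ 2 := by rw [div_pow, one_pow, Real.sq_sqrt zero_le_two]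
    _ < v i ^ 2 := pow_lt_pow_left₀ hi (by positivity) two_ne_zero
  exact abs_lt_of_sq_lt_sq (by linarith) ((by positivity : (0 : ℝ) ≤ 1 / √2).trans hi.le)

section Curve

variable {E : Type*} [NormedAddCommGroup E] [NormedSpace ℝ E] {D : Set ℝ} {α α' : ℝ → E}

lemma strictMonoOn_comp_of_hasDerivWithinAt_pos (hD : Convex ℝ D) (ℓ : StrongDual ℝ E)
    (hα : ∀ x ∈ D, HasDerivWithinAt α (α' x) D x) (hpos : ∀ x ∈ interior D, 0 < ℓ (α' x)) :
    StrictMonoOn (ℓ ∘ α) D :=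
  strictMonoOn_of_hasDerivWithinAt_pos hD
    (ℓ.continuous.comp_continuousOn fun x hx => (hα x hx).continuousWithinAt)
    (fun x hx => (ℓ.hasFDerivAt.comp_hasDerivWithinAt x (hα x (interior_subset hx))).mono
      interior_subset)
    hpos

lemma strictAntiOn_comp_of_hasDerivWithinAt_neg (hD : Convex ℝ D) (ℓ : StrongDual ℝ E)
    (hα : ∀ x ∈ D, HasDerivWithinAt α (α' x) D x) (hneg : ∀ x ∈ interior D, ℓ (α' x) < 0) :
    StrictAntiOn (ℓ ∘ α) D :=
  strictAntiOn_of_hasDerivWithinAt_neg hD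
    (ℓ.continuous.comp_continuousOn fun x hx => (hα x hx).continuousWithinAt)
    (fun x hx => (ℓ.hasFDerivAt.comp_hasDerivWithinAt x (hα x (interior_subset hx))).mono
      interior_subset)
    hneg

end Curve

lemma injOn_add_of_strictMonoOn_of_strictAntiOn {ι κ E F : Type*} [LinearOrder ι]
    [LinearOrder κ] [AddCancelCommMonoid E] [FunLike F E ℝ] [AddMonoidHomClass F E ℝ] (ℓ₁ ℓ₂ : F)
    {f : ι → E} {g : κ → E} {S : Set ι} {T : Set κ}
    (hf₁ : StrictMonoOn (ℓ₁ ∘ f) S) (hf₂ : StrictMonoOn (ℓ₂ ∘ f) S)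
    (hg₁ : StrictMonoOn (ℓ₁ ∘ g) T) (hg₂ : StrictAntiOn (ℓ₂ ∘ g) T) :
    InjOn (fun q : ι × κ => f q.1 + g q.2) (S ×ˢ T) := by
  have not_lt_of_eq : ∀ s ∈ S, ∀ s' ∈ S, ∀ t ∈ T, ∀ t' ∈ T,
      f s + g t = f s' + g t' → ¬ s < s' := by
    intro s hs s' hs' t ht t' ht' heq hlt
    have h₁ := congrArg ℓ₁ heq
    have h₂ := congrArg ℓ₂ heq
    simp only [map_add] at h₁ h₂
    have hf₁lt : ℓ₁ (f s) < ℓ₁ (f s') := hf₁ hs hs' hlt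
    have hf₂lt : ℓ₂ (f s) < ℓ₂ (f s') := hf₂ hs hs' hlt
    have ht't : t' < t := (hg₁.lt_iff_lt ht' ht).1 (by simp only [Function.comp]; linarith)
    have htt' : t < t' := (hg₂.lt_iff_gt ht' ht).1 (by simp only [Function.comp]; linarith)
    exact lt_asymm ht't htt'
  rintro ⟨s, t⟩ ⟨hs, ht⟩ ⟨s', t'⟩ ⟨hs', ht'⟩ heq
  dsimp only at heq
  obtain rfl : s = s' := le_antisymm (not_lt.1 (not_lt_of_eq s' hs' s hs t' ht' t ht heq.symm))
    (not_lt.1 (not_lt_of_eq s hs s' hs' t ht t' ht' heq))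
  obtain rfl : t = t' := hg₁.injOn ht ht' (congrArg ℓ₁ (add_left_cancel heq))
  rfl

theorem stmt_6_general (α₁ α₂ α₁' α₂' : ℝ → EuclideanSpace ℝ (Fin 2))
    (hd₁ : ∀ s ∈ Icc (0:ℝ) 1, HasDerivWithinAt α₁ (α₁' s) (Icc 0 1) s)
    (hd₂ : ∀ t ∈ Icc (0:ℝ) 1, HasDerivWithinAt α₂ (α₂' t) (Icc 0 1) t)
    (hu₁ : ∀ s ∈ Icc (0:ℝ) 1, ‖α₁' s‖ = 1) (hu₂ : ∀ t ∈ Icc (0:ℝ) 1, ‖α₂' t‖ = 1)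
    (hang₁ : ∀ s ∈ Ioo (0:ℝ) 1, (α₁' s) 0 > 1 / Real.sqrt 2)
    (hang₂ : ∀ t ∈ Ioo (0:ℝ) 1, (α₂' t) 1 > 1 / Real.sqrt 2) :
    Set.InjOn (fun q : ℝ × ℝ => α₁ q.1 + α₂ q.2) (Icc 0 1 ×ˢ Icc 0 1) := by
  have hcone₁ : ∀ s ∈ interior (Icc (0:ℝ) 1), |α₁' s 1| < α₁' s 0 := fun s hs => by
    rw [interior_Icc] at hs
    exact abs_apply_lt_apply_of_norm_le_one (by decide) (hu₁ s (Ioo_subset_Icc_self hs)).le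
      (hang₁ s hs)
  have hcone₂ : ∀ t ∈ interior (Icc (0:ℝ) 1), |α₂' t 0| < α₂' t 1 := fun t ht => by
    rw [interior_Icc] at ht
    exact abs_apply_lt_apply_of_norm_le_one (by decide) (hu₂ t (Ioo_subset_Icc_self ht)).le
      (hang₂ t ht)
  let diag : StrongDual ℝ (EuclideanSpace ℝ (Fin 2)) :=
    EuclideanSpace.proj 0 + EuclideanSpace.proj 1
  let antidiag : StrongDual ℝ (EuclideanSpace ℝ (Fin 2)) :=
    EuclideanSpace.proj 0 - EuclideanSpace.proj 1
  refine injOn_add_of_strictMonoOn_of_strictAntiOn diag antidiag ?_ ?_ ?_ ?_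
  · exact strictMonoOn_comp_of_hasDerivWithinAt_pos (convex_Icc 0 1) diag hd₁ fun s hs =>
      show 0 < α₁' s 0 + α₁' s 1 by linarith [abs_lt.1 (hcone₁ s hs)]
  · exact strictMonoOn_comp_of_hasDerivWithinAt_pos (convex_Icc 0 1) antidiag hd₁ fun s hs =>
      show 0 < α₁' s 0 - α₁' s 1 by linarith [abs_lt.1 (hcone₁ s hs)]
  · exact strictMonoOn_comp_of_hasDerivWithinAt_pos (convex_Icc 0 1) diag hd₂ fun t ht =>
      show 0 < α₂' t 0 + α₂' t 1 by linarith [abs_lt.1 (hcone₂ t ht)]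
  · exact strictAntiOn_comp_of_hasDerivWithinAt_neg (convex_Icc 0 1) antidiag hd₂ fun t ht =>
      show α₂' t 0 - α₂' t 1 < 0 by linarith [abs_lt.1 (hcone₂ t ht)]

/-- Injectivity of laminar maps: if `α₁, α₂ : [0,1] → ℝ²` are `C¹` unit-speed curves
whose tangents stay within 45° of the `x`- and `y`-directions respectively, then the
laminar map `f(s,t) = α₁(s) + α₂(t)` is injective on `[0,1]²`. -/
theorem stmt_6 (α₁ α₂ α₁' α₂' : ℝ → EuclideanSpace ℝ (Fin 2))
    (hd₁ : ∀ s ∈ Icc (0:ℝ) 1, HasDerivWithinAt α₁ (α₁' s) (Icc 0 1) s)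
    (hd₂ : ∀ t ∈ Icc (0:ℝ) 1, HasDerivWithinAt α₂ (α₂' t) (Icc 0 1) t)
    (hc₁ : ContinuousOn α₁' (Icc 0 1)) (hc₂ : ContinuousOn α₂' (Icc 0 1))
    (hu₁ : ∀ s ∈ Icc (0:ℝ) 1, ‖α₁' s‖ = 1) (hu₂ : ∀ t ∈ Icc (0:ℝ) 1, ‖α₂' t‖ = 1)
    (hang₁ : ∀ s ∈ Ioo (0:ℝ) 1, (α₁' s) 0 > 1 / Real.sqrt 2)
    (hang₂ : ∀ t ∈ Ioo (0:ℝ) 1, (α₂' t) 1 > 1 / Real.sqrt 2) :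
    Set.InjOn (fun q : ℝ × ℝ => α₁ q.1 + α₂ q.2) (Icc 0 1 ×ˢ Icc 0 1) :=
  stmt_6_general α₁ α₂ α₁' α₂' hd₁ hd₂ hu₁ hu₂ hang₁ hang₂
end

section
/- Let p : [0,1]² → ℝ² be continuous, differentiable with continuous second mixed partial derivatives on (0,1)², such that: (a) for every rational r ∈ [0,1] and every subinterval [a,b] ⊆ [0,1], the restriction of p to the vertical segment {r} × [a,b] and to the horizontal segment [a,b] × {r} preserves arc length; (b) the partial derivative vectors ∂p/∂x and ∂p/∂y are nowhere collinear on (0,1)². Then p has laminar form: there exist maps α₁, α₂ : [0,1] → ℝ² with p(x,y) = α₁(x) + α₂(y) for all (x,y). -/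
/-!
Along a rational line, `p` is parametrized by arc length, so the corresponding partial derivative
has norm at most `1` (the curve is `1`-Lipschitz) and at least `1` (otherwise the curve would be
`K`-Lipschitz with `K < 1` on a short interval, and shorter than that interval). Continuity of
`fderiv p` and density of `ℚ` give `‖∂ₓp‖ = ‖∂ᵧp‖ = 1` on the whole open square.
Differentiating `‖∂ᵧp‖² = 1` in `x` and `‖∂ₓp‖² = 1` in `y` shows that the (symmetric) mixed
partial `∂ₓ∂ᵧp` is orthogonal to both `∂ₓp` and `∂ᵧp`, which span `ℝ²`; so it vanishes.
Then `∂ᵧp` does not depend on `x`, hence `p (x, y) - p (x₀, y)` does not depend on `y`, which is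
the laminar form on the open square, and continuity extends it to the closed square.
-/

open Set Filter Topology
open scoped RealInnerProductSpace

theorem lipschitzOnWith_one_of_eVariationOn_le {X : Type*} [PseudoMetricSpace X] {f : ℝ → X}
    {s : Set ℝ}
    (hvar : ∀ a ∈ s, ∀ b ∈ s, a ≤ b → eVariationOn f (Icc a b) ≤ ENNReal.ofReal (b - a)) :
    LipschitzOnWith 1 f s := by
  refine LipschitzOnWith.of_dist_le_mul fun a ha b hb => ?_
  wlog hab : a ≤ b generalizing a b
  · rw [dist_comm, dist_comm a]; exact this b hb a ha (le_of_not_ge hab)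
  have hedist := (eVariationOn.edist_le f (left_mem_Icc.2 hab) (right_mem_Icc.2 hab)).trans
    (hvar a ha b hb hab)
  rw [edist_dist, ENNReal.ofReal_le_ofReal_iff (by linarith)] at hedist
  simpa [Real.dist_eq, abs_of_nonpos (sub_nonpos.2 hab)] using hedist

theorem eq_zero_of_inner_eq_zero_of_linearIndependent_pair {𝕜 E : Type*} [RCLike 𝕜]
    [NormedAddCommGroup E] [InnerProductSpace 𝕜 E] (hE : Module.finrank 𝕜 E = 2)
    {a b v : E} (hab : LinearIndependent 𝕜 ![a, b]) (ha : inner 𝕜 a v = 0)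
    (hb : inner 𝕜 b v = 0) : v = 0 := by
  let basis := basisOfLinearIndependentOfCardEqFinrank hab (by simp [hE])
  refine InnerProductSpace.ext_inner_left_basis basis fun i => ?_
  fin_cases i <;> simpa [basis]

theorem HasDerivAt.inner_eq_zero_of_norm_eventually_eq {E : Type*} [NormedAddCommGroup E]
    [InnerProductSpace ℝ E] {f : ℝ → E} {v : E} {t c : ℝ}
    (hf : HasDerivAt f v t) (hc : ∀ᶠ s in 𝓝 t, ‖f s‖ = c) : ⟪f t, v⟫ = 0 := by
  have hconst : HasDerivAt (‖f ·‖ ^ 2) 0 t :=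
    (hasDerivAt_const t (c ^ 2)).congr_of_eventuallyEq (hc.mono fun s hs => by simp [hs])
  simpa using hf.norm_sq.unique hconst

theorem HasFDerivAt.clm_apply_const {E G F : Type*} [NormedAddCommGroup E] [NormedSpace ℝ E]
    [NormedAddCommGroup G] [NormedSpace ℝ G] [NormedAddCommGroup F] [NormedSpace ℝ F]
    {c : E → G →L[ℝ] F} {c' : E →L[ℝ] G →L[ℝ] F} {z : E} (hc : HasFDerivAt c c' z) (v : G) :
    HasFDerivAt (fun w => c w v) ((ContinuousLinearMap.apply ℝ F v).comp c') z :=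
  (ContinuousLinearMap.apply ℝ F v).hasFDerivAt.comp z hc

section

variable {F : Type*} [NormedAddCommGroup F] [NormedSpace ℝ F] {f f' : ℝ → F} {s I J : Set ℝ}
  {g : ℝ × ℝ → F} {g' : ℝ × ℝ →L[ℝ] F} {x y : ℝ} {p : ℝ × ℝ → F}

theorem HasDerivAt.norm_le_one_of_eVariationOn_le {v : F} (hf : HasDerivAt f v y)
    (hs : s ∈ 𝓝 y)
    (hvar : ∀ a ∈ s, ∀ b ∈ s, a ≤ b → eVariationOn f (Icc a b) ≤ ENNReal.ofReal (b - a)) :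
    ‖v‖ ≤ 1 := by
  simpa using hf.le_of_lipschitzOn hs (lipschitzOnWith_one_of_eVariationOn_le hvar)

theorem one_le_norm_deriv_of_le_eVariationOn (hs : s ∈ 𝓝 y)
    (hf : ∀ t ∈ s, HasDerivAt f (f' t) t) (hf' : ContinuousAt f' y)
    (hvar : ∀ a ∈ s, ∀ b ∈ s, a ≤ b → ENNReal.ofReal (b - a) ≤ eVariationOn f (Icc a b)) :
    1 ≤ ‖f' y‖ := by
  by_contra! hlt
  obtain ⟨K, hyK, hK1⟩ := exists_between hlt
  have hK : 0 ≤ K := (norm_nonneg _).trans hyK.le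
  obtain ⟨ε, hε, hball⟩ := Metric.eventually_nhds_iff_ball.1
    ((hf'.norm.eventually (gt_mem_nhds hyK)).and hs)
  have hsub : Icc (y - ε / 2) (y + ε / 2) ⊆ Metric.ball y ε := by
    intro t ht
    rw [Metric.mem_ball, Real.dist_eq, abs_sub_lt_iff]
    constructor <;> linarith [ht.1, ht.2]
  have hlip : LipschitzOnWith K.toNNReal f (Icc (y - ε / 2) (y + ε / 2)) :=
    (convex_Icc _ _).lipschitzOnWith_of_nnnorm_hasDerivWithin_le
      (fun t ht => (hf t (hball t (hsub ht)).2).hasDerivWithinAt)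
      (fun t ht => by
        rw [← NNReal.coe_le_coe, coe_nnnorm, Real.coe_toNNReal _ hK]
        exact (hball t (hsub ht)).1.le)
  have hupper : eVariationOn f (Icc (y - ε / 2) (y + ε / 2)) ≤
      ENNReal.ofReal (K * ((y + ε / 2) - (y - ε / 2))) := by
    rw [ENNReal.ofReal_mul hK, ← eVariationOn_id_Icc]
    exact hlip.comp_eVariationOn_le (mapsTo_id _)
  have hlower := hvar _ (hball _ (hsub (left_mem_Icc.2 (by linarith)))).2
    _ (hball _ (hsub (right_mem_Icc.2 (by linarith)))).2 (by linarith)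
  have := (ENNReal.ofReal_le_ofReal_iff (by nlinarith)).1 (hlower.trans hupper)
  nlinarith

theorem norm_deriv_eq_one_of_eVariationOn_eq (hs : s ∈ 𝓝 y)
    (hf : ∀ t ∈ s, HasDerivAt f (f' t) t) (hf' : ContinuousAt f' y)
    (hvar : ∀ a ∈ s, ∀ b ∈ s, a ≤ b → eVariationOn f (Icc a b) = ENNReal.ofReal (b - a)) :
    ‖f' y‖ = 1 :=
  le_antisymm
    ((hf y (mem_of_mem_nhds hs)).norm_le_one_of_eVariationOn_le hs
      fun a ha b hb hab => (hvar a ha b hb hab).le)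
    (one_le_norm_deriv_of_le_eVariationOn hs hf hf' fun a ha b hb hab => (hvar a ha b hb hab).ge)

theorem IsOpen.is_const_of_hasDerivAt_zero (hI : IsOpen I) (hI' : IsPreconnected I)
    (hf : ∀ t ∈ I, HasDerivAt f 0 t) (hx : x ∈ I) (hy : y ∈ I) : f x = f y :=
  hI.is_const_of_deriv_eq_zero hI' (fun t ht => (hf t ht).differentiableAt.differentiableWithinAt)
    (fun t ht => (hf t ht).deriv) hx hy

theorem HasFDerivAt.hasDerivAt_fst_slice (hg : HasFDerivAt g g' (x, y)) :
    HasDerivAt (fun t => g (t, y)) (g' (1, 0)) x :=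
  hg.comp_hasDerivAt x ((hasDerivAt_id x).prodMk (hasDerivAt_const x y))

theorem HasFDerivAt.hasDerivAt_snd_slice (hg : HasFDerivAt g g' (x, y)) :
    HasDerivAt (fun t => g (x, t)) (g' (0, 1)) y :=
  hg.comp_hasDerivAt y ((hasDerivAt_const y x).prodMk (hasDerivAt_id y))

theorem norm_eq_one_of_eVariationOn_rat_slices {g g' : ℝ → ℝ → F} (hI : IsOpen I)
    (hJ : IsOpen J)
    (hg : ∀ x ∈ I, ∀ t ∈ J, HasDerivAt (g x) (g' x t) t)
    (hg' : ContinuousOn (Function.uncurry g') (I ×ˢ J))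
    (hvar : ∀ r : ℚ, (r : ℝ) ∈ I → ∀ a ∈ J, ∀ b ∈ J, a ≤ b →
      eVariationOn (g r) (Icc a b) = ENNReal.ofReal (b - a))
    {t : ℝ} (hx : x ∈ I) (ht : t ∈ J) : ‖g' x t‖ = 1 := by
  have hslice : ∀ x ∈ I, ContinuousOn (g' x) J := fun x hx =>
    hg'.comp (continuous_const.prodMk continuous_id).continuousOn fun s hs => ⟨hx, hs⟩
  have hrat : EqOn (fun x => ‖g' x t‖) 1 (I ∩ range Rat.cast) := by
    rintro _ ⟨hr, r, rfl⟩
    exact norm_deriv_eq_one_of_eVariationOn_eq (hJ.mem_nhds ht) (hg r hr)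
      ((hslice r hr).continuousAt (hJ.mem_nhds ht)) (hvar r hr)
  have hcont : ContinuousOn (fun x => ‖g' x t‖) I :=
    (hg'.comp (continuous_id.prodMk continuous_const).continuousOn fun s hs => ⟨hs, ht⟩).norm
  exact hrat.of_subset_closure hcont continuousOn_const inter_subset_left
    (Rat.denseRange_cast.open_subset_closure_inter hI) hx

theorem norm_fderiv_apply_snd_eq_one_of_eVariationOn (hI : IsOpen I) (hJ : IsOpen J)
    (hp : ContDiffOn ℝ 1 p (I ×ˢ J))
    (hvar : ∀ r : ℚ, (r : ℝ) ∈ I → ∀ a ∈ J, ∀ b ∈ J, a ≤ b →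
      eVariationOn (fun t => p (r, t)) (Icc a b) = ENNReal.ofReal (b - a)) :
    ∀ z ∈ I ×ˢ J, ‖fderiv ℝ p z (0, 1)‖ = 1 := fun _ hz =>
  norm_eq_one_of_eVariationOn_rat_slices (g := fun x t => p (x, t)) hI hJ
    (fun _ hx _ ht => ((hp.differentiableOn one_ne_zero).differentiableAt
      ((hI.prod hJ).mem_nhds ⟨hx, ht⟩)).hasFDerivAt.hasDerivAt_snd_slice)
    ((hp.continuousOn_fderiv_of_isOpen (hI.prod hJ) le_rfl).clm_apply continuousOn_const)
    hvar hz.1 hz.2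

theorem norm_fderiv_apply_fst_eq_one_of_eVariationOn (hI : IsOpen I) (hJ : IsOpen J)
    (hp : ContDiffOn ℝ 1 p (I ×ˢ J))
    (hvar : ∀ r : ℚ, (r : ℝ) ∈ J → ∀ a ∈ I, ∀ b ∈ I, a ≤ b →
      eVariationOn (fun t => p (t, r)) (Icc a b) = ENNReal.ofReal (b - a)) :
    ∀ z ∈ I ×ˢ J, ‖fderiv ℝ p z (1, 0)‖ = 1 := fun _ hz =>
  norm_eq_one_of_eVariationOn_rat_slices (g := fun y t => p (t, y)) hJ hI
    (fun _ hy _ ht => ((hp.differentiableOn one_ne_zero).differentiableAt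
      ((hI.prod hJ).mem_nhds ⟨ht, hy⟩)).hasFDerivAt.hasDerivAt_fst_slice)
    (((hp.continuousOn_fderiv_of_isOpen (hI.prod hJ) le_rfl).comp continuous_swap.continuousOn
      fun _ hw => ⟨hw.2, hw.1⟩).clm_apply continuousOn_const)
    hvar hz.2 hz.1

theorem add_eq_add_of_fderiv_fderiv_apply_eq_zero (hI : IsOpen I) (hI' : IsPreconnected I)
    (hJ : IsOpen J) (hJ' : IsPreconnected J) (hp : DifferentiableOn ℝ p (I ×ˢ J))
    (hp' : DifferentiableOn ℝ (fderiv ℝ p) (I ×ˢ J))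
    (hmix : ∀ z ∈ I ×ˢ J, fderiv ℝ (fderiv ℝ p) z (1, 0) (0, 1) = 0)
    {x₀ y₀ : ℝ} (hx : x ∈ I) (hx₀ : x₀ ∈ I) (hy : y ∈ J) (hy₀ : y₀ ∈ J) :
    p (x, y) + p (x₀, y₀) = p (x, y₀) + p (x₀, y) := by
  have hS := hI.prod hJ
  have hD : ∀ z ∈ I ×ˢ J, HasFDerivAt p (fderiv ℝ p z) z := fun z hz =>
    (hp.differentiableAt (hS.mem_nhds hz)).hasFDerivAt
  have hD2 : ∀ z ∈ I ×ˢ J, HasFDerivAt (fderiv ℝ p) (fderiv ℝ (fderiv ℝ p) z) z := fun z hz =>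
    (hp'.differentiableAt (hS.mem_nhds hz)).hasFDerivAt
  have hpartial₂ : ∀ t ∈ J, fderiv ℝ p (x, t) (0, 1) = fderiv ℝ p (x₀, t) (0, 1) :=
    fun t ht => hI.is_const_of_hasDerivAt_zero hI'
      (fun s hs => by
        simpa [hmix (s, t) ⟨hs, ht⟩] using
          ((hD2 (s, t) ⟨hs, ht⟩).clm_apply_const (0, 1)).hasDerivAt_fst_slice)
      hx hx₀
  have hdiff : p (x, y) - p (x₀, y) = p (x, y₀) - p (x₀, y₀) :=
    hJ.is_const_of_hasDerivAt_zero hJ' (fun t ht => by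
      simpa [hpartial₂ t ht] using
        (hD (x, t) ⟨hx, ht⟩).hasDerivAt_snd_slice.sub (hD (x₀, t) ⟨hx₀, ht⟩).hasDerivAt_snd_slice)
      hy hy₀
  rwa [sub_eq_sub_iff_add_eq_add] at hdiff

theorem exists_add_of_fderiv_fderiv_apply_eq_zero {a b c d : ℝ} (hab : a < b) (hcd : c < d)
    (hcont : ContinuousOn p (Icc a b ×ˢ Icc c d)) (hp : ContDiffOn ℝ 2 p (Ioo a b ×ˢ Ioo c d))
    (hmix : ∀ z ∈ Ioo a b ×ˢ Ioo c d, fderiv ℝ (fderiv ℝ p) z (1, 0) (0, 1) = 0) :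
    ∃ α₁ α₂ : ℝ → F, ∀ x ∈ Icc a b, ∀ y ∈ Icc c d, p (x, y) = α₁ x + α₂ y := by
  obtain ⟨x₀, hx₀⟩ := nonempty_Ioo.2 hab
  obtain ⟨y₀, hy₀⟩ := nonempty_Ioo.2 hcd
  have hadd : EqOn (fun z => p z + p (x₀, y₀)) (fun z => p (z.1, y₀) + p (x₀, z.2))
      (Icc a b ×ˢ Icc c d) :=
    EqOn.of_subset_closure (s := Ioo a b ×ˢ Ioo c d)
      (fun z hz => add_eq_add_of_fderiv_fderiv_apply_eq_zero isOpen_Ioo isPreconnected_Ioo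
        isOpen_Ioo isPreconnected_Ioo (hp.differentiableOn two_ne_zero)
        ((hp.fderiv_of_isOpen (isOpen_Ioo.prod isOpen_Ioo) (m := 1) le_rfl).differentiableOn
          one_ne_zero) hmix hz.1 hx₀ hz.2 hy₀)
      (hcont.add continuousOn_const)
      ((hcont.comp (continuous_fst.prodMk continuous_const).continuousOn
          fun z hz => ⟨hz.1, Ioo_subset_Icc_self hy₀⟩).add
        (hcont.comp (continuous_const.prodMk continuous_snd).continuousOn
          fun z hz => ⟨Ioo_subset_Icc_self hx₀, hz.2⟩))
      (prod_mono Ioo_subset_Icc_self Ioo_subset_Icc_self)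
      (by rw [closure_prod_eq, closure_Ioo hab.ne, closure_Ioo hcd.ne])
  refine ⟨fun x => p (x, y₀) - p (x₀, y₀), fun y => p (x₀, y), fun x hx y hy => ?_⟩
  rw [sub_add_eq_add_sub, eq_sub_iff_add_eq]
  exact hadd ⟨hx, hy⟩

end

theorem fderiv_fderiv_apply_eq_zero_of_norm_partials_eq_one {E : Type*} [NormedAddCommGroup E]
    [InnerProductSpace ℝ E] (hE : Module.finrank ℝ E = 2) {p : ℝ × ℝ → E} {z : ℝ × ℝ}
    (hp : ContDiffAt ℝ 2 p z)
    (h₁ : ∀ᶠ w in 𝓝 z, ‖fderiv ℝ p w (1, 0)‖ = 1) (h₂ : ∀ᶠ w in 𝓝 z, ‖fderiv ℝ p w (0, 1)‖ = 1)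
    (hli : LinearIndependent ℝ ![fderiv ℝ p z (1, 0), fderiv ℝ p z (0, 1)]) :
    fderiv ℝ (fderiv ℝ p) z (1, 0) (0, 1) = 0 := by
  obtain ⟨x, y⟩ := z
  have hD : HasFDerivAt (fderiv ℝ p) (fderiv ℝ (fderiv ℝ p) (x, y)) (x, y) :=
    ((hp.fderiv_right le_rfl).differentiableAt one_ne_zero).hasFDerivAt
  have horth₂ : ⟪fderiv ℝ p (x, y) (0, 1), fderiv ℝ (fderiv ℝ p) (x, y) (1, 0) (0, 1)⟫ = 0 :=
    (hD.clm_apply_const (0, 1)).hasDerivAt_fst_slice.inner_eq_zero_of_norm_eventually_eq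
      (((continuous_id.prodMk continuous_const).tendsto x).eventually h₂)
  have horth₁ : ⟪fderiv ℝ p (x, y) (1, 0), fderiv ℝ (fderiv ℝ p) (x, y) (0, 1) (1, 0)⟫ = 0 :=
    (hD.clm_apply_const (1, 0)).hasDerivAt_snd_slice.inner_eq_zero_of_norm_eventually_eq
      (((continuous_const.prodMk continuous_id).tendsto y).eventually h₁)
  rw [← hp.isSymmSndFDerivAt (by simp [minSmoothness_of_isRCLikeNormedField])] at horth₁
  exact eq_zero_of_inner_eq_zero_of_linearIndependent_pair hE hli horth₁ horth₂

/-- If `p : [0,1]² → ℝ²` is continuous, `C²` on the open square, preserves arc length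
along all rational vertical and horizontal segments, and its partial derivative vectors
are nowhere collinear on the open square, then `p` has laminar form
`p(x,y) = α₁(x) + α₂(y)`. -/
theorem stmt_8 (p : ℝ × ℝ → EuclideanSpace ℝ (Fin 2))
    (hcont : ContinuousOn p (Icc 0 1 ×ˢ Icc 0 1))
    (hsmooth : ContDiffOn ℝ 2 p (Ioo 0 1 ×ˢ Ioo 0 1))
    (hvert : ∀ r : ℚ, (r : ℝ) ∈ Icc (0:ℝ) 1 → ∀ a b : ℝ, 0 ≤ a → a ≤ b → b ≤ 1 →
      eVariationOn (fun y : ℝ => p ((r : ℝ), y)) (Icc a b) = ENNReal.ofReal (b - a))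
    (hhoriz : ∀ r : ℚ, (r : ℝ) ∈ Icc (0:ℝ) 1 → ∀ a b : ℝ, 0 ≤ a → a ≤ b → b ≤ 1 →
      eVariationOn (fun x : ℝ => p (x, (r : ℝ))) (Icc a b) = ENNReal.ofReal (b - a))
    (hnoncol : ∀ z ∈ Ioo (0:ℝ) 1 ×ˢ Ioo (0:ℝ) 1, ∀ c : ℝ,
      fderiv ℝ p z (1, 0) ≠ c • fderiv ℝ p z (0, 1) ∧
      fderiv ℝ p z (0, 1) ≠ c • fderiv ℝ p z (1, 0)) :
    ∃ α₁ α₂ : ℝ → EuclideanSpace ℝ (Fin 2),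
      ∀ x ∈ Icc (0:ℝ) 1, ∀ y ∈ Icc (0:ℝ) 1, p (x, y) = α₁ x + α₂ y := by
  have hS : IsOpen (Ioo (0:ℝ) 1 ×ˢ Ioo (0:ℝ) 1) := isOpen_Ioo.prod isOpen_Ioo
  have hnorm₁ := norm_fderiv_apply_fst_eq_one_of_eVariationOn isOpen_Ioo isOpen_Ioo
    (hsmooth.of_le (by norm_num))
    fun r hr a ha b hb hab => hhoriz r (Ioo_subset_Icc_self hr) a b ha.1.le hab hb.2.le
  have hnorm₂ := norm_fderiv_apply_snd_eq_one_of_eVariationOn isOpen_Ioo isOpen_Ioo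
    (hsmooth.of_le (by norm_num))
    fun r hr a ha b hb hab => hvert r (Ioo_subset_Icc_self hr) a b ha.1.le hab hb.2.le
  have hmix : ∀ z ∈ Ioo (0:ℝ) 1 ×ˢ Ioo (0:ℝ) 1, fderiv ℝ (fderiv ℝ p) z (1, 0) (0, 1) = 0 :=
    fun z hz => fderiv_fderiv_apply_eq_zero_of_norm_partials_eq_one (by simp)
      (hsmooth.contDiffAt (hS.mem_nhds hz)) (eventually_of_mem (hS.mem_nhds hz) hnorm₁)
      (eventually_of_mem (hS.mem_nhds hz) hnorm₂)
      ((LinearIndependent.pair_iff' (by simpa using (hnoncol z hz 0).1)).2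
        fun c hc => (hnoncol z hz c).2 hc.symm)
  exact exists_add_of_fderiv_fderiv_apply_eq_zero zero_lt_one zero_lt_one hcont hsmooth hmix
end

section
/- Let n, m be supernatural numbers. Then ℚ(n) = ℚ(m) as subgroups of ℚ if and only if n and m have the same exponent sequence, and more generally there exists a positive rational q with q·ℚ(n) = ℚ(m) if and only if n and m are finitely equivalent. -/
/-!
A rational `x` lies in `ℚ(n)` exactly when its reduced denominator divides `n`, i.e. when
`-v_p(x) ≤ r_p` for every prime `p`. Multiplication by `b/a` shifts every `p`-adic valuation
by `v_p(b) - v_p(a)`, and testing on the elements `p^{-k}` shows that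
`(b/a)·ℚ(n) ⊆ ℚ(m)` holds exactly when `r_p + v_p(a) ≤ s_p + v_p(b)` for all `p`.
Both parts of the theorem follow by applying this in both directions, the first with `a = b = 1`.
-/

/-- A positive integer `b` divides the supernatural number `r` if every prime occurs
in `b` with multiplicity at most `r p`. -/
def dividesSupernatural (b : ℕ) (r : Nat.Primes → ℕ∞) : Prop :=
  ∀ p : Nat.Primes, ((Nat.factorization b p.1 : ℕ∞)) ≤ r p

/-- `ℚ(n)`: rationals `a/b` with `a ∈ ℤ` and `b` a positive integer dividing `n`. -/
def Qsup (r : Nat.Primes → ℕ∞) : Set ℚ :=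
  {q : ℚ | ∃ a : ℤ, ∃ b : ℕ, 0 < b ∧ dividesSupernatural b r ∧ q = (a : ℚ) / (b : ℚ)}

/-- Finite equivalence of supernatural numbers: `a·n = b·m` for positive integers `a,b`. -/
def FinEquiv (r s : Nat.Primes → ℕ∞) : Prop :=
  ∃ a b : ℕ, 0 < a ∧ 0 < b ∧ ∀ p : Nat.Primes,
    r p + (Nat.factorization a p.1 : ℕ∞) = s p + (Nat.factorization b p.1 : ℕ∞)

lemma ENat.add_natCast_le_of_forall {m n : ℕ∞} {c : ℕ}
    (h : ∀ k : ℕ, (k : ℕ∞) ≤ m → (k + c : ℕ∞) ≤ n) : m + c ≤ n := by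
  induction m using ENat.recTopCoe with
  | top =>
    have hn : ⊤ ≤ n := ENat.forall_natCast_le_iff_le.1 fun k _ =>
      le_trans le_self_add (h k le_top)
    rw [top_le_iff.1 hn]
    exact le_top
  | coe m => exact h m le_rfl

lemma ENat.natCast_tsub_le_iff (m n : ℕ) (e : ℕ∞) :
    ((m - n : ℕ) : ℕ∞) ≤ e ↔ (m : ℕ∞) ≤ e + n := by
  rw [ENat.natCast_sub, tsub_le_iff_right]

lemma Rat.factorization_den {p : ℕ} (hp : p.Prime) (x : ℚ) :
    x.den.factorization p = (-padicValRat p x).toNat := by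
  rw [Nat.factorization_def _ hp, padicValRat_def]
  by_cases h : p ∣ x.den
  · have hnum : padicValInt p x.num = 0 := by
      refine padicValInt.eq_zero_of_not_dvd fun hd => hp.one_lt.ne' (Nat.dvd_one.mp ?_)
      rw [← x.reduced]
      exact Nat.dvd_gcd (Int.ofNat_dvd_left.mp hd) h
    omega
  · rw [padicValNat.eq_zero_of_not_dvd h]
    omega

lemma padicValRat_div_mul {p : ℕ} [Fact p.Prime] {a b : ℕ} (ha : a ≠ 0) (hb : b ≠ 0) {x : ℚ}
    (hx : x ≠ 0) :
    padicValRat p ((b : ℚ) / a * x) = b.factorization p - a.factorization p + padicValRat p x := by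
  have ha' : (a : ℚ) ≠ 0 := Nat.cast_ne_zero.2 ha
  have hb' : (b : ℚ) ≠ 0 := Nat.cast_ne_zero.2 hb
  rw [padicValRat.mul (div_ne_zero hb' ha') hx, padicValRat.div hb' ha', padicValRat.of_nat,
    padicValRat.of_nat, Nat.factorization_def _ Fact.out, Nat.factorization_def _ Fact.out]

lemma padicValRat_inv_pow_self {p : ℕ} [Fact p.Prime] (k : ℕ) :
    padicValRat p ((p : ℚ) ^ k)⁻¹ = -k := by
  rw [padicValRat.inv, ← Nat.cast_pow, padicValRat.of_nat, padicValNat.prime_pow]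

lemma mem_Qsup_iff_dividesSupernatural_den {r : Nat.Primes → ℕ∞} {x : ℚ} :
    x ∈ Qsup r ↔ dividesSupernatural x.den r := by
  constructor
  · rintro ⟨a, b, hb, hdvd, rfl⟩ p
    have hden : ((a : ℚ) / b).den ∣ b := by
      have := Rat.den_dvd a b
      rw [Rat.divInt_eq_div] at this
      exact_mod_cast this
    refine le_trans ?_ (hdvd p)
    exact_mod_cast (Nat.factorization_le_iff_dvd (Rat.den_nz _) hb.ne').2 hden p.1
  · exact fun h => ⟨x.num, x.den, x.pos, h, (Rat.num_div_den x).symm⟩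

lemma mem_Qsup_iff_padicValRat {r : Nat.Primes → ℕ∞} {x : ℚ} :
    x ∈ Qsup r ↔ ∀ p : Nat.Primes, ((-padicValRat p x).toNat : ℕ∞) ≤ r p := by
  simp only [mem_Qsup_iff_dividesSupernatural_den, dividesSupernatural,
    fun p : Nat.Primes => Rat.factorization_den p.2 x]

lemma zero_mem_Qsup (r : Nat.Primes → ℕ∞) : (0 : ℚ) ∈ Qsup r :=
  mem_Qsup_iff_padicValRat.2 fun p => by simp

lemma inv_pow_mem_Qsup {r : Nat.Primes → ℕ∞} (p : Nat.Primes) {k : ℕ} (hk : (k : ℕ∞) ≤ r p) :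
    ((p : ℚ) ^ k)⁻¹ ∈ Qsup r := by
  refine mem_Qsup_iff_padicValRat.2 fun q => ?_
  have := Fact.mk q.2
  rcases eq_or_ne q p with rfl | hqp
  · simpa [padicValRat_inv_pow_self] using hk
  · have hq : ¬ q.1 ∣ p.1 ^ k := fun hd =>
      hqp (Subtype.ext ((Nat.prime_dvd_prime_iff_eq q.2 p.2).1 (q.2.dvd_of_dvd_pow hd)))
    rw [padicValRat.inv, ← Nat.cast_pow, padicValRat.of_nat, padicValNat.eq_zero_of_not_dvd hq]
    simp

theorem image_mul_Qsup_subset_iff {r s : Nat.Primes → ℕ∞} {a b : ℕ} (ha : 0 < a) (hb : 0 < b) :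
    (fun x => (b : ℚ) / a * x) '' Qsup r ⊆ Qsup s ↔
      ∀ p : Nat.Primes, r p + (a.factorization p.1 : ℕ∞) ≤ s p + (b.factorization p.1 : ℕ∞) := by
  constructor
  · intro h p
    have := Fact.mk p.2
    refine ENat.add_natCast_le_of_forall fun k hk => ?_
    have hmem := mem_Qsup_iff_padicValRat.1 (h ⟨_, inv_pow_mem_Qsup p hk, rfl⟩) p
    rw [padicValRat_div_mul ha.ne' hb.ne' (inv_ne_zero (pow_ne_zero _ (mod_cast p.2.ne_zero))),
      padicValRat_inv_pow_self] at hmem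
    have hval : (-((b.factorization p : ℤ) - a.factorization p + -k)).toNat
        = k + a.factorization p - b.factorization p := by omega
    rw [hval, ENat.natCast_tsub_le_iff] at hmem
    exact_mod_cast hmem
  · rintro h _ ⟨x, hx, rfl⟩
    rcases eq_or_ne x 0 with rfl | hx0
    · simpa using zero_mem_Qsup s
    refine mem_Qsup_iff_padicValRat.2 fun p => ?_
    have := Fact.mk p.2
    have hval : (-padicValRat p ((b : ℚ) / a * x)).toNat
        ≤ (-padicValRat p x).toNat + a.factorization p - b.factorization p := by
      rw [padicValRat_div_mul ha.ne' hb.ne' hx0]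
      omega
    refine le_trans (Nat.cast_le.2 hval) ?_
    rw [ENat.natCast_tsub_le_iff, Nat.cast_add]
    calc _ ≤ r p + a.factorization p := by gcongr; exact mem_Qsup_iff_padicValRat.1 hx p
      _ ≤ _ := h p

theorem image_mul_Qsup_eq_iff {r s : Nat.Primes → ℕ∞} {a b : ℕ} (ha : 0 < a) (hb : 0 < b) :
    (fun x => (b : ℚ) / a * x) '' Qsup r = Qsup s ↔
      ∀ p : Nat.Primes, r p + (a.factorization p.1 : ℕ∞) = s p + (b.factorization p.1 : ℕ∞) := by
  have ha' : (a : ℚ) ≠ 0 := Nat.cast_ne_zero.2 ha.ne'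
  have hb' : (b : ℚ) ≠ 0 := Nat.cast_ne_zero.2 hb.ne'
  have hinv : (fun x => (b : ℚ) / a * x) '' Qsup r = (fun y => (a : ℚ) / b * y) ⁻¹' Qsup r :=
    congrFun (Set.image_eq_preimage_of_inverse (fun x => by field_simp) (fun y => by field_simp)) _
  rw [Set.Subset.antisymm_iff, image_mul_Qsup_subset_iff ha hb, hinv, ← Set.image_subset_iff,
    image_mul_Qsup_subset_iff hb ha, ← forall_and]
  exact forall_congr' fun p => le_antisymm_iff.symm

lemma Rat.natAbs_num_div_den {q : ℚ} (hq : 0 < q) : ((q.num.natAbs : ℕ) : ℚ) / q.den = q := by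
  rw [Nat.cast_natAbs, abs_of_pos (Rat.num_pos.2 hq), Rat.num_div_den]

/-- `ℚ(n) = ℚ(m)` iff `n` and `m` have the same exponent sequence; and there is a
positive rational `q` with `q·ℚ(n) = ℚ(m)` iff `n` and `m` are finitely equivalent. -/
theorem stmt_15 (r s : Nat.Primes → ℕ∞) :
    (Qsup r = Qsup s ↔ r = s) ∧
    ((∃ q : ℚ, 0 < q ∧ (fun x => q * x) '' Qsup r = Qsup s) ↔ FinEquiv r s) := by
  refine ⟨?_, ?_, ?_⟩
  · have h := image_mul_Qsup_eq_iff (r := r) (s := s) one_pos one_pos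
    simp only [Nat.cast_one, div_one, one_mul, Set.image_id', Nat.factorization_one,
      Finsupp.coe_zero, Pi.zero_apply, Nat.cast_zero, add_zero] at h
    rw [h, funext_iff]
  · rintro ⟨q, hq, hqr⟩
    have hnum : 0 < q.num.natAbs := Int.natAbs_pos.2 (Rat.num_ne_zero.2 hq.ne')
    refine ⟨q.den, q.num.natAbs, q.pos, hnum, ?_⟩
    rwa [← image_mul_Qsup_eq_iff q.pos hnum, Rat.natAbs_num_div_den hq]
  · rintro ⟨a, b, ha, hb, h⟩
    exact ⟨b / a, by positivity, (image_mul_Qsup_eq_iff ha hb).2 h⟩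
end
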